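/- In a binary Merkle tree over a finite set of leaves, if a membership path for an element d verifies against the root computed from a leaf set R, and the hash function H is injective (idealized), then d ∈ R. Formally: define root of a complete binary tree of hashed leaves recursively by root(leaf v) = H_leaf(v) and root(node l r) = H_node(root l, root r); if there exists a path (list of sibling hashes and direction bits) whose fold from H_leaf(d) equals root(T), and H_leaf, H_node are injective with disjoint ranges, then d is a leaf value of T. -/
import Mathlib


/-- A binary Merkle tree with values at leaves. -/
inductive MTree (α : Type*) where
  | leaf (v : α)
  | node (l r : MTree α)

namespace MTree

variable {α β : Type*}

/-- Root hash of a Merkle tree. -/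
def root (Hleaf : α → β) (Hnode : β → β → β) : MTree α → β
  | leaf v => Hleaf v
  | node l r => Hnode (root Hleaf Hnode l) (root Hleaf Hnode r)

/-- Leaf values of a Merkle tree. -/
def leaves : MTree α → List α
  | leaf v => [v]
  | node l r => leaves l ++ leaves r

/-- Verify a membership path: fold from the leaf hash, combining with each
sibling hash on the side indicated by the direction bit. -/
def verifyPath (Hleaf : α → β) (Hnode : β → β → β) (d : α)
    (path : List (Bool × β)) : β :=
  path.foldl (fun acc p => if p.1 then Hnode p.2 acc else Hnode acc p.2) (Hleaf d)

end MTree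

/-- Merkle path verification soundness: with injective, disjoint-range hash
functions, a verifying path for `d` against `root T` implies `d` is a leaf
of `T`. -/
theorem stmt_3 {α β : Type*} (Hleaf : α → β) (Hnode : β → β → β)
    (hleaf_inj : Function.Injective Hleaf)
    (hnode_inj : Function.Injective2 Hnode)
    (hdisj : ∀ (a : α) (x y : β), Hleaf a ≠ Hnode x y)
    (T : MTree α) (d : α) (path : List (Bool × β))
    (hver : MTree.verifyPath Hleaf Hnode d path = MTree.root Hleaf Hnode T) :
    d ∈ MTree.leaves T := by
  induction T generalizing path with
  | leaf v =>
    induction path using List.reverseRecOn with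
    | nil =>
      simp only [MTree.verifyPath, List.foldl_nil, MTree.root] at hver
      simpa [MTree.leaves] using hleaf_inj hver
    | append_singleton xs p _ =>
      simp only [MTree.verifyPath, List.foldl_append, List.foldl_cons,
        List.foldl_nil, MTree.root] at hver
      split at hver <;> exact absurd hver.symm (hdisj v _ _)
  | node l r ihl ihr =>
    induction path using List.reverseRecOn with
    | nil =>
      simp only [MTree.verifyPath, List.foldl_nil, MTree.root] at hver
      exact absurd hver (hdisj d _ _)
    | append_singleton xs p _ =>
      simp only [MTree.verifyPath, List.foldl_append, List.foldl_cons,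
        List.foldl_nil, MTree.root] at hver
      simp only [MTree.leaves, List.mem_append]
      split at hver
      · exact Or.inr (ihr xs (hnode_inj hver).2)
      · exact Or.inl (ihl xs (hnode_inj hver).1)
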